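/- Let G be a claw-free graph. Then there exists a minimum dominating set of G that is independent. -/

import Mathlib

/-- A set `S` dominates `G` if every vertex is in `S` or adjacent to a vertex of `S`. -/
def IsDomSet {V : Type*} (G : SimpleGraph V) (S : Set V) : Prop :=
  ∀ v : V, v ∈ S ∨ ∃ u ∈ S, G.Adj u v

/-- The domination number of a finite graph. -/
noncomputable def domNum {V : Type*} (G : SimpleGraph V) [Fintype V] : ℕ :=
  sInf {n | ∃ S : Finset V, IsDomSet G ↑S ∧ S.card = n}

/-- A graph is claw-free if it has no induced `K_{1,3}`. -/
def ClawFree {V : Type*} (G : SimpleGraph V) : Prop :=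
  IsEmpty (completeBipartiteGraph (Fin 1) (Fin 3) ↪g G)

/-!
Among the minimum dominating sets choose one, `S`, inducing as few edges as possible, and suppose
`u, w ∈ S` are adjacent. Since `S \ {u}` does not dominate, `u` has a private neighbour `x ∉ S`.
Then `S - u + x` is again a minimum dominating set: any other private neighbour `v` of `u` must be
adjacent to `x`, as otherwise `u` is the centre of a claw with leaves `x`, `v`, `w`. As `x` has no
neighbour in `S \ {u}`, the new set induces fewer edges, a contradiction.
-/

section

variable {V : Type*} {G : SimpleGraph V}

theorem ClawFree.adj_or_adj_or_adj (hG : ClawFree G) {u x y z : V}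
    (hx : G.Adj u x) (hy : G.Adj u y) (hz : G.Adj u z)
    (hxy : x ≠ y) (hxz : x ≠ z) (hyz : y ≠ z) :
    G.Adj x y ∨ G.Adj x z ∨ G.Adj y z := by
  by_contra! h
  obtain ⟨nxy, nxz, nyz⟩ := h
  have := hx.ne; have := hy.ne; have := hz.ne
  refine hG.false ⟨⟨Sum.elim (fun _ => u) ![x, y, z], ?_⟩, fun {a b} => ?_⟩
  · rintro (a | a) (b | b) h <;> fin_cases a <;> fin_cases b <;> simp_all
  · change G.Adj (Sum.elim (fun _ => u) ![x, y, z] a) (Sum.elim (fun _ => u) ![x, y, z] b) ↔ _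
    rcases a with a | a <;> rcases b with b | b <;> fin_cases a <;> fin_cases b <;>
      simp_all [G.adj_comm]

def IsExtPrivateNeighbor (G : SimpleGraph V) (S : Set V) (u x : V) : Prop :=
  x ∉ S ∧ G.Adj u x ∧ ∀ s ∈ S, s ≠ u → ¬ G.Adj s x

theorem IsDomSet.diff_singleton {S : Set V} {u w : V} (hS : IsDomSet G S) (hw : w ∈ S)
    (huw : G.Adj u w) (h : ∀ x, ¬ IsExtPrivateNeighbor G S u x) : IsDomSet G (S \ {u}) := by
  intro v
  rcases hS v with hv | ⟨s, hs, hsv⟩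
  · by_cases hvu : v = u
    · exact .inr ⟨w, ⟨hw, huw.ne'⟩, hvu ▸ huw.symm⟩
    · exact .inl ⟨hv, hvu⟩
  · by_cases hsu : s = u
    · subst hsu
      by_cases hv : v ∈ S
      · exact .inl ⟨hv, hsv.ne'⟩
      · obtain ⟨s', hs', hs'u, hs'v⟩ : ∃ s' ∈ S, s' ≠ s ∧ G.Adj s' v := by
          simpa [IsExtPrivateNeighbor, hv, hsv] using h v
        exact .inr ⟨s', ⟨hs', hs'u⟩, hs'v⟩
    · exact .inr ⟨s, ⟨hs, hsu⟩, hsv⟩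

theorem IsDomSet.insert_diff_singleton (hG : ClawFree G) {S : Set V} {u w x : V}
    (hS : IsDomSet G S) (hw : w ∈ S) (huw : G.Adj u w) (hx : IsExtPrivateNeighbor G S u x) :
    IsDomSet G (insert x (S \ {u})) := by
  obtain ⟨hxS, hux, hxpriv⟩ := hx
  intro v
  rcases hS v with hv | ⟨s, hs, hsv⟩
  · by_cases hvu : v = u
    · exact .inr ⟨w, .inr ⟨hw, huw.ne'⟩, hvu ▸ huw.symm⟩
    · exact .inl (.inr ⟨hv, hvu⟩)
  · by_cases hsu : s = u
    · subst hsu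
      by_cases hv : v ∈ S
      · exact .inl (.inr ⟨hv, hsv.ne'⟩)
      by_cases hvx : v = x
      · exact .inl (.inl hvx)
      by_cases hvpriv : ∃ s' ∈ S, s' ≠ s ∧ G.Adj s' v
      · obtain ⟨s', hs', hs'u, hs'v⟩ := hvpriv
        exact .inr ⟨s', .inr ⟨hs', hs'u⟩, hs'v⟩
      push Not at hvpriv
      -- `s` would be the centre of a claw with leaves `x`, `v`, `w`
      have hxv : G.Adj x v := by
        have hne : x ≠ w := fun h => hxS (h ▸ hw)
        rcases hG.adj_or_adj_or_adj hux hsv huw (Ne.symm hvx) hne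
          (fun h => hv (h ▸ hw)) with h | h | h
        · exact h
        · exact absurd h.symm (hxpriv w hw huw.ne')
        · exact absurd h.symm (hvpriv w hw huw.ne')
      exact .inr ⟨x, .inl rfl, hxv⟩
    · exact .inr ⟨s, .inr ⟨hs, hsu⟩, hsv⟩

/-- Ordered pairs, so twice the number of edges induced by `S`. -/
def adjPairs (G : SimpleGraph V) (S : Set V) : Set (V × V) :=
  {p | p.1 ∈ S ∧ p.2 ∈ S ∧ G.Adj p.1 p.2}

theorem adjPairs_insert_diff_singleton_ssubset {S : Set V} {u w x : V} (hu : u ∈ S) (hw : w ∈ S)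
    (huw : G.Adj u w) (hx : IsExtPrivateNeighbor G S u x) :
    adjPairs G (insert x (S \ {u})) ⊂ adjPairs G S := by
  obtain ⟨hxS, -, hxpriv⟩ := hx
  have hx_isolated : ∀ a ∈ insert x (S \ {u}), ¬ G.Adj a x := by
    rintro a (rfl | ⟨ha, hau⟩)
    · exact G.irrefl
    · exact hxpriv a ha hau
  refine Set.ssubset_iff_of_subset ?_ |>.mpr ⟨(u, w), ⟨hu, hw, huw⟩, fun h => ?_⟩
  · rintro ⟨a, b⟩ ⟨ha, hb, hab⟩
    have hax : a ≠ x := fun h => hx_isolated b hb (h ▸ hab.symm)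
    have hbx : b ≠ x := fun h => hx_isolated a ha (h ▸ hab)
    exact ⟨(ha.resolve_left hax).1, (hb.resolve_left hbx).1, hab⟩
  · rcases h.1 with hux | ⟨-, hu⟩
    · exact hxS (hux ▸ hu)
    · exact hu rfl

section Finite

variable [Fintype V]

theorem domNum_le_card {S : Finset V} (hS : IsDomSet G S) : domNum G ≤ S.card :=
  Nat.sInf_le ⟨S, hS, rfl⟩

theorem exists_isDomSet_card_eq_domNum (G : SimpleGraph V) :
    ∃ S : Finset V, IsDomSet G S ∧ S.card = domNum G :=
  Nat.sInf_mem (s := {n | ∃ S : Finset V, IsDomSet G S ∧ S.card = n})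
    ⟨_, Finset.univ, fun v => .inl (Finset.mem_univ v), rfl⟩

theorem exists_isExtPrivateNeighbor_of_card_eq_domNum [DecidableEq V] {S : Finset V}
    {u w : V} (hS : IsDomSet G S) (hcard : S.card = domNum G) (hu : u ∈ S) (hw : w ∈ S)
    (huw : G.Adj u w) :
    ∃ x, IsExtPrivateNeighbor G S u x := by
  by_contra! h
  have hle := domNum_le_card (S := S.erase u) (by
    simpa only [Finset.coe_erase] using hS.diff_singleton hw huw h)
  have := Finset.card_erase_lt_of_mem hu
  omega

end Finite

end

theorem stmt_14 {V : Type*} [Fintype V] (G : SimpleGraph V) (hG : ClawFree G) :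
    ∃ S : Finset V, IsDomSet G ↑S ∧
      (∀ u ∈ S, ∀ w ∈ S, u ≠ w → ¬ G.Adj u w) ∧ S.card = domNum G := by
  classical
  obtain ⟨S, ⟨hSdom, hScard⟩, hSmin⟩ :=
    Set.exists_min_image {S : Finset V | IsDomSet G S ∧ S.card = domNum G}
      (fun S => (adjPairs G S).ncard) (Set.toFinite _) (exists_isDomSet_card_eq_domNum G)
  refine ⟨S, hSdom, fun u hu w hw _ huw => ?_, hScard⟩
  obtain ⟨x, hx⟩ := exists_isExtPrivateNeighbor_of_card_eq_domNum hSdom hScard hu hw huw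
  have hS' : ↑(insert x (S.erase u)) = insert x (↑S \ {u} : Set V) := by push_cast; rfl
  have hS'dom : IsDomSet G ↑(insert x (S.erase u)) :=
    hS' ▸ hSdom.insert_diff_singleton hG hw huw hx
  have hS'card : (insert x (S.erase u)).card = domNum G := by
    rw [Finset.card_insert_of_notMem (fun h => hx.1 (Finset.mem_of_mem_erase h)),
      Finset.card_erase_add_one hu, hScard]
  have hfewer : (adjPairs G ↑(insert x (S.erase u))).ncard < (adjPairs G S).ncard :=
    Set.ncard_lt_ncard (hS' ▸ adjPairs_insert_diff_singleton_ssubset hu hw huw hx)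
  exact (hSmin _ ⟨hS'dom, hS'card⟩).not_gt hfewer
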